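/- arXiv:1611.02303 — 2 statements merged into one kernel-verified Lean document; each statement's English description precedes it below -/
import Mathlib

section
/- Let X be an indecomposable continuum, let 𝒞(X) be the set of composants of X, and let 𝒮(X) = {S ⊆ X : S is closed and X \ S is not connected}. If |𝒮(X)| ≤ |𝒞(X)|, then X has a dense subspace W with |W| = |𝒞(X)| such that W is widely-connected. -/
universe u

open Set

/-- The composant of a point `x` in a space `X`: the union of all proper
subcontinua of `X` containing `x`. -/
def composant {X : Type u} [TopologicalSpace X] (x : X) : Set X :=
  ⋃₀ {K : Set X | x ∈ K ∧ IsCompact K ∧ IsConnected K ∧ K ≠ univ}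

/-- The set of composants of `X`. -/
def composants (X : Type u) [TopologicalSpace X] : Set (Set X) :=
  {C | ∃ x : X, C = composant x}

/-- A continuum is indecomposable if it is not the union of two proper subcontinua. -/
def Indecomposable (X : Type u) [TopologicalSpace X] : Prop :=
  ¬ ∃ A B : Set X, IsCompact A ∧ IsConnected A ∧ A ≠ univ ∧
      IsCompact B ∧ IsConnected B ∧ B ≠ univ ∧ A ∪ B = univ

/-- The family of closed subsets `S` of `X` such that `X \ S` is not connected. -/
def separators (X : Type u) [TopologicalSpace X] : Set (Set X) :=
  {S | IsClosed S ∧ ¬ IsPreconnected Sᶜ}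

/-- A subset `W` of a space is widely-connected if it is connected and every
connected subset of `W` with more than one point is dense in `W`. -/
def WidelyConnectedSubset {X : Type u} [TopologicalSpace X] (W : Set X) : Prop :=
  IsConnected W ∧ ∀ A ⊆ W, A.Nontrivial → IsPreconnected A → W ⊆ closure A

section Lemmas
variable {X : Type u} [TopologicalSpace X]

lemma mem_composant_iff {x y : X} :
    y ∈ composant x ↔ ∃ K : Set X, (x ∈ K ∧ IsCompact K ∧ IsConnected K ∧ K ≠ univ) ∧ y ∈ K := by
  simp [composant, mem_sUnion, mem_setOf_eq]

lemma union_proper (hX : Indecomposable X) {K K' : Set X}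
    (hKc : IsCompact K) (hKconn : IsConnected K) (hKne : K ≠ univ)
    (hK'c : IsCompact K') (hK'conn : IsConnected K') (hK'ne : K' ≠ univ)
    {w : X} (hw : w ∈ K) (hw' : w ∈ K') :
    IsCompact (K ∪ K') ∧ IsConnected (K ∪ K') ∧ K ∪ K' ≠ univ := by
  refine ⟨hKc.union hK'c, ⟨⟨w, Or.inl hw⟩,
    IsPreconnected.union w hw hw' hKconn.isPreconnected hK'conn.isPreconnected⟩, ?_⟩
  intro heq
  exact hX ⟨K, K', hKc, hKconn, hKne, hK'c, hK'conn, hK'ne, heq⟩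

lemma composant_eq_of_mem (hX : Indecomposable X) {x y : X} (hy : y ∈ composant x) :
    composant y = composant x := by
  obtain ⟨K', ⟨hxK', hK'c, hK'conn, hK'ne⟩, hyK'⟩ := mem_composant_iff.mp hy
  ext z
  constructor
  · intro hz
    obtain ⟨K, ⟨hyK, hKc, hKconn, hKne⟩, hzK⟩ := mem_composant_iff.mp hz
    obtain ⟨hc, hconn, hne⟩ :=
      union_proper hX hKc hKconn hKne hK'c hK'conn hK'ne hyK hyK'
    exact mem_composant_iff.mpr ⟨K ∪ K', ⟨Or.inr hxK', hc, hconn, hne⟩, Or.inl hzK⟩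
  · intro hz
    obtain ⟨K, ⟨hxK, hKc, hKconn, hKne⟩, hzK⟩ := mem_composant_iff.mp hz
    obtain ⟨hc, hconn, hne⟩ :=
      union_proper hX hKc hKconn hKne hK'c hK'conn hK'ne hxK hxK'
    exact mem_composant_iff.mpr ⟨K ∪ K', ⟨Or.inr hyK', hc, hconn, hne⟩, Or.inl hzK⟩

lemma mem_composant_self (hnd : ∃ p q : X, p ≠ q) (x : X) : x ∈ composant x := by
  refine mem_composant_iff.mpr ⟨{x}, ⟨rfl, isCompact_singleton, isConnected_singleton, ?_⟩, rfl⟩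
  intro heq
  obtain ⟨p, q, hpq⟩ := hnd
  have hp : p ∈ ({x} : Set X) := heq ▸ mem_univ p
  have hq : q ∈ ({x} : Set X) := heq ▸ mem_univ q
  exact hpq (hp.trans hq.symm)

lemma isPreconnected_composant (x : X) : IsPreconnected (composant x) :=
  isPreconnected_sUnion x _ (fun _ hs => hs.1) (fun _ hs => hs.2.2.1.isPreconnected)

end Lemmas

section Density
variable {X : Type u} [TopologicalSpace X] [CompactSpace X] [T2Space X] [ConnectedSpace X]

lemma composant_dense (hnd : ∃ p q : X, p ≠ q) (x : X) : Dense (composant x) := by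
  rw [dense_iff_inter_open]
  intro O hO hOne
  by_cases hxO : x ∈ O
  · exact ⟨x, hxO, mem_composant_self hnd x⟩
  obtain ⟨p, hpO⟩ := hOne
  have hpO' : p ∈ O \ {x} := ⟨hpO, fun hp => hxO ((mem_singleton_iff.mp hp) ▸ hpO)⟩
  have hOx_open : IsOpen (O \ {x}) := hO.sdiff isClosed_singleton
  obtain ⟨U, V, hU, hV, hpU, hsubV, hUV⟩ :=
    normal_separation (isClosed_singleton (x := p)) hOx_open.isClosed_compl
      (by simp [disjoint_singleton_left, hpO'])
  have hpU' : p ∈ U := hpU rfl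
  have hclU : closure U ⊆ O \ {x} := by
    have h1 : closure U ⊆ Vᶜ := closure_minimal
      (fun z hz hzV => hUV.ne_of_mem hz hzV rfl) hV.isClosed_compl
    intro z hz
    by_contra hzn
    exact h1 hz (hsubV hzn)
  -- the closed set `A = Uᶜ` contains `x` and misses `p`
  set A : Set X := Uᶜ with hA_def
  have hA_closed : IsClosed A := hU.isClosed_compl
  have hxA : x ∈ A := fun hxU => (hclU (subset_closure hxU)).2 rfl
  haveI : CompactSpace A := isCompact_iff_compactSpace.mp hA_closed.isCompact
  set x' : A := ⟨x, hxA⟩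
  set F : Set A := {a : A | (a : X) ∈ closure U} with hF_def
  have hF_closed : IsClosed F := isClosed_closure.preimage continuous_subtype_val
  by_cases hMF : (connectedComponent x' ∩ F).Nonempty
  · obtain ⟨a, haM, haF⟩ := hMF
    refine ⟨(a : X), (hclU haF).1, ?_⟩
    refine mem_composant_iff.mpr ⟨Subtype.val '' connectedComponent x',
      ⟨⟨x', mem_connectedComponent, rfl⟩, ?_, ?_, ?_⟩, ⟨a, haM, rfl⟩⟩
    · exact (isClosed_connectedComponent.isCompact).image continuous_subtype_val
    · exact isConnected_connectedComponent.image _ continuous_subtype_val.continuousOn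
    · intro heq
      have : p ∈ Subtype.val '' connectedComponent x' := heq ▸ mem_univ p
      obtain ⟨b, _, hb⟩ := this
      exact b.2 (hb ▸ hpU')
  · -- find a clopen set in `A` containing `x'` missing `F`, conclude it is clopen in `X`
    rw [not_nonempty_iff_eq_empty] at hMF
    have hinter : F ∩ ⋂ s : { s : Set A // IsClopen s ∧ x' ∈ s }, (s : Set A) = ∅ := by
      rw [← connectedComponent_eq_iInter_isClopen x', inter_comm]
      exact hMF
    obtain ⟨t, ht⟩ := hF_closed.isCompact.elim_finite_subfamily_closed _
      (fun s : { s : Set A // IsClopen s ∧ x' ∈ s } => s.2.1.isClosed) hinter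
    set D : Set A := ⋂ s ∈ t, (s : Set A) with hD_def
    have hD_clopen : IsClopen D := isClopen_biInter_finset (fun s _ => s.2.1)
    have hxD : x' ∈ D := mem_iInter₂.mpr fun s _ => s.2.2
    have hDF : D ∩ F = ∅ := by
      rw [inter_comm]
      exact ht
    set D' : Set X := Subtype.val '' D with hD'_def
    have hD'ne : D'.Nonempty := ⟨x, x', hxD, rfl⟩
    have hD'clU : D' ∩ closure U = ∅ := by
      rw [eq_empty_iff_forall_notMem]
      rintro z ⟨⟨b, hbD, rfl⟩, hzU⟩
      have : b ∈ D ∩ F := ⟨hbD, hzU⟩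
      rw [hDF] at this
      exact this
    have hD'closed : IsClosed D' :=
      ((hD_clopen.isClosed.isCompact).image continuous_subtype_val).isClosed
    have hD'open : IsOpen D' := by
      obtain ⟨O₂, hO₂, hO₂D⟩ := isOpen_induced_iff.mp hD_clopen.isOpen
      have : D' = O₂ ∩ (closure U)ᶜ := by
        apply Subset.antisymm
        · rintro z ⟨b, hbD, rfl⟩
          refine ⟨?_, fun hz => (eq_empty_iff_forall_notMem.mp hD'clU (b : X))
            ⟨⟨b, hbD, rfl⟩, hz⟩⟩
          rw [← hO₂D] at hbD
          exact hbD
        · rintro z ⟨hzO₂, hzU⟩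
          have hzA : z ∈ A := fun hzU' => hzU (subset_closure hzU')
          refine ⟨⟨z, hzA⟩, ?_, rfl⟩
          rw [← hO₂D]
          exact hzO₂
      rw [this]
      exact hO₂.inter isClosed_closure.isOpen_compl
    have : D' = univ := IsClopen.eq_univ ⟨hD'closed, hD'open⟩ hD'ne
    exfalso
    have : p ∈ D' := this ▸ mem_univ p
    obtain ⟨b, _, hb⟩ := this
    exact b.2 (hb ▸ hpU')

end Density

section Main
variable {X : Type u} [TopologicalSpace X] [CompactSpace X] [T2Space X] [ConnectedSpace X]

/-- Every separator meets every dense preconnected set. -/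
lemma separator_meets {S C : Set X} (hS : S ∈ separators X) (hd : Dense C)
    (hc : IsPreconnected C) : (C ∩ S).Nonempty := by
  by_contra hCS
  rw [not_nonempty_iff_eq_empty] at hCS
  have hCsub : C ⊆ Sᶜ := fun z hz hzS =>
    (eq_empty_iff_forall_notMem.mp hCS z) ⟨hz, hzS⟩
  apply hS.2
  intro u v hu hv hsub hne1 hne2
  obtain ⟨a, hau, haC⟩ := hd.inter_open_nonempty (Sᶜ ∩ u) ((hS.1.isOpen_compl).inter hu)
    hne1
  obtain ⟨b, hbv, hbC⟩ := hd.inter_open_nonempty (Sᶜ ∩ v) ((hS.1.isOpen_compl).inter hv)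
    hne2
  obtain ⟨z, hzC, hzuv⟩ := hc u v hu hv (hCsub.trans hsub) ⟨a, haC, hau.2⟩ ⟨b, hbC, hbv.2⟩
  exact ⟨z, hCsub hzC, hzuv⟩

/-- If `X` is an indecomposable continuum with `|𝒮(X)| ≤ |𝒞(X)|`, then `X` has a
dense widely-connected subspace of size `|𝒞(X)|`. -/
theorem exists_dense_widely_connected_subset {X : Type u} [TopologicalSpace X]
    [CompactSpace X] [T2Space X] [ConnectedSpace X]
    (hX : Indecomposable X)
    (h : Cardinal.mk (separators X) ≤ Cardinal.mk (composants X)) :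
    ∃ W : Set X, Dense W ∧ Cardinal.mk W = Cardinal.mk (composants X) ∧
      WidelyConnectedSubset W := by
  classical
  by_cases hnd : ∃ p q : X, p ≠ q
  swap
  · -- degenerate case: `X` is a subsingleton
    push_neg at hnd
    haveI : Subsingleton X := ⟨hnd⟩
    haveI : Nonempty X := inferInstance
    refine ⟨univ, dense_univ, ?_, ⟨⟨univ_nonempty, isPreconnected_univ⟩, ?_⟩⟩
    · have h1 : Cardinal.mk (univ : Set X) = 1 := by
        rw [Cardinal.mk_univ]
        exact Cardinal.eq_one_iff_unique.mpr ⟨inferInstance, inferInstance⟩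
      have h2 : Cardinal.mk (composants X) = 1 := by
        refine Cardinal.eq_one_iff_unique.mpr ⟨⟨?_⟩, ⟨⟨composant (Classical.arbitrary X),
          Classical.arbitrary X, rfl⟩⟩⟩
        rintro ⟨C, z, rfl⟩ ⟨C', z', rfl⟩
        exact Subtype.ext (by rw [Subsingleton.elim z z'])
      rw [h1, h2]
    · intro A _ hAnt _
      obtain ⟨a, _, b, _, hab⟩ := hAnt
      exact absurd (Subsingleton.elim a b) hab
  -- main case
  obtain ⟨j⟩ : Nonempty (separators X ↪ composants X) := Cardinal.le_def _ _ |>.mp h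
  -- every element of a composant class is nonempty, and separators meet composants
  have hCconn : ∀ C : composants X, IsPreconnected (C : Set X) := by
    rintro ⟨C, z, rfl⟩; exact isPreconnected_composant z
  have hCdense : ∀ C : composants X, Dense (C : Set X) := by
    rintro ⟨C, z, rfl⟩; exact composant_dense hnd z
  have hCne : ∀ C : composants X, (C : Set X).Nonempty := by
    rintro ⟨C, z, rfl⟩; exact ⟨z, mem_composant_self hnd z⟩
  have hSC : ∀ (S : separators X) (C : composants X), ((C : Set X) ∩ (S : Set X)).Nonempty :=
    fun S C => separator_meets S.2 (hCdense C) (hCconn C)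
  -- pick one point in each composant; inside the associated separator when possible
  let ptS : separators X → X := fun S => (hSC S (j S)).some
  have hptS_sep : ∀ S : separators X, ptS S ∈ (S : Set X) := fun S => (hSC S (j S)).some_mem.2
  have hptS_comp : ∀ S : separators X, ptS S ∈ ((j S : Set X)) := fun S => (hSC S (j S)).some_mem.1
  let pt : composants X → X := fun C =>
    if hj : ∃ S, j S = C then ptS hj.choose else (hCne C).some
  have hpt_mem : ∀ C : composants X, pt C ∈ (C : Set X) := by
    intro C
    simp only [pt]
    split_ifs with hj
    · have := hptS_comp hj.choose
      rwa [hj.choose_spec] at this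
    · exact (hCne C).some_mem
  have hpt_sep : ∀ S : separators X, pt (j S) ∈ (S : Set X) := by
    intro S
    have hj : ∃ S', j S' = j S := ⟨S, rfl⟩
    have hch : hj.choose = S := j.injective hj.choose_spec
    have heq : pt (j S) = ptS hj.choose := by simp only [pt, dif_pos hj]
    rw [heq, hch]
    exact hptS_sep S
  have hpt_comp : ∀ C : composants X, composant (pt C) = (C : Set X) := by
    rintro ⟨C, z, rfl⟩
    exact composant_eq_of_mem hX (hpt_mem ⟨composant z, z, rfl⟩)
  have hpt_inj : Function.Injective pt := by
    intro C C' hCC'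
    apply Subtype.ext
    rw [← hpt_comp C, ← hpt_comp C', hCC']
  set W : Set X := Set.range pt with hW_def
  have hW_meets : ∀ S ∈ separators X, (W ∩ S).Nonempty :=
    fun S hS => ⟨pt (j ⟨S, hS⟩), mem_range_self _, hpt_sep ⟨S, hS⟩⟩
  have hWne : W.Nonempty := by
    obtain ⟨p, q, _⟩ := hnd
    exact ⟨pt ⟨composant p, p, rfl⟩, mem_range_self _⟩
  -- density of W
  have hWd : Dense W := by
    rw [dense_iff_inter_open]
    intro O hO hOne
    by_cases hOc : Oᶜ.Nonempty
    · obtain ⟨p, hpO⟩ := hOne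
      obtain ⟨U, V, hU, hV, hsubU, hpV, hUV⟩ :=
        normal_separation hO.isClosed_compl (isClosed_singleton (x := p))
          (by simp [disjoint_singleton_right, hpO])
      have hpV' : p ∈ V := hpV rfl
      have hS : (U ∪ V)ᶜ ∈ separators X := by
        refine ⟨(hU.union hV).isClosed_compl, ?_⟩
        intro hpc
        rw [compl_compl] at hpc
        obtain ⟨z, _, hz⟩ := hpc U V hU hV subset_rfl
          (hOc.imp fun a ha => ⟨Or.inl (hsubU ha), hsubU ha⟩)
          ⟨p, Or.inr hpV', hpV'⟩
        exact hUV.ne_of_mem hz.1 hz.2 rfl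
      obtain ⟨w, hwW, hwS⟩ := hW_meets _ hS
      refine ⟨w, ?_, hwW⟩
      by_contra hwO
      exact hwS (Or.inl (hsubU hwO))
    · rw [not_nonempty_iff_eq_empty, compl_empty_iff] at hOc
      obtain ⟨w, hw⟩ := hWne
      exact ⟨w, hOc ▸ mem_univ w, hw⟩
  -- connectedness of W
  have hWpc : IsPreconnected W := by
    intro u v hu hv hsub hne1 hne2
    by_contra hne
    rw [not_nonempty_iff_eq_empty] at hne
    set A : Set X := W ∩ u with hA_def
    set B : Set X := W ∩ v with hB_def
    have hAB : W = A ∪ B := by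
      apply Subset.antisymm
      · intro w hw
        rcases hsub hw with h1 | h2
        · exact Or.inl ⟨hw, h1⟩
        · exact Or.inr ⟨hw, h2⟩
      · rintro w (⟨hw, _⟩ | ⟨hw, _⟩) <;> exact hw
    have hBclA : ∀ b ∈ B, b ∉ closure A := by
      rintro b ⟨hbW, hbv⟩ hbcl
      obtain ⟨z, hzv, hzA⟩ := mem_closure_iff.mp hbcl v hv hbv
      exact (eq_empty_iff_forall_notMem.mp hne z) ⟨hzA.1, hzA.2, hzv⟩
    have hAclB : ∀ a ∈ A, a ∉ closure B := by
      rintro a ⟨haW, hau⟩ hacl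
      obtain ⟨z, hzu, hzB⟩ := mem_closure_iff.mp hacl u hu hau
      exact (eq_empty_iff_forall_notMem.mp hne z) ⟨hzB.1, hzu, hzB.2⟩
    have hclAB : closure A ∪ closure B = univ := by
      rw [← closure_union, ← hAB]
      exact hWd.closure_eq
    have hS : closure A ∩ closure B ∈ separators X := by
      refine ⟨isClosed_closure.inter isClosed_closure, ?_⟩
      intro hpc
      obtain ⟨a, haW, hau⟩ := hne1
      obtain ⟨b, hbW, hbv⟩ := hne2
      have haA : a ∈ A := ⟨haW, hau⟩
      have hbB : b ∈ B := ⟨hbW, hbv⟩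
      obtain ⟨z, _, hz1, hz2⟩ := hpc (closure A)ᶜ (closure B)ᶜ
        isClosed_closure.isOpen_compl isClosed_closure.isOpen_compl
        (by rw [compl_inter])
        ⟨b, fun hb => (hBclA b hbB) hb.1, hBclA b hbB⟩
        ⟨a, fun ha => (hAclB a haA) ha.2, hAclB a haA⟩
      rcases (hclAB ▸ mem_univ z : z ∈ closure A ∪ closure B) with h1 | h2
      · exact hz1 h1
      · exact hz2 h2
    obtain ⟨w, hwW, hwS⟩ := hW_meets _ hS
    rcases hAB ▸ hwW with hA' | hB'
    · exact hAclB w hA' hwS.2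
    · exact hBclA w hB' hwS.1
  refine ⟨W, hWd, ?_, ⟨⟨hWne, hWpc⟩, ?_⟩⟩
  · exact Cardinal.mk_range_eq pt hpt_inj
  · -- widely connected
    intro A hAW hAnt hApc
    obtain ⟨a, haA, b, hbA, hab⟩ := hAnt
    have hcl : closure A = univ := by
      by_contra hclne
      have hbca : b ∈ composant a := mem_composant_iff.mpr
        ⟨closure A, ⟨subset_closure haA, isClosed_closure.isCompact,
          ⟨⟨a, subset_closure haA⟩, hApc.closure⟩, hclne⟩, subset_closure hbA⟩
      obtain ⟨C, hCa⟩ := hAW haA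
      obtain ⟨C', hC'b⟩ := hAW hbA
      have : (C' : Set X) = (C : Set X) := by
        rw [← hpt_comp C, ← hpt_comp C', hCa, hC'b]
        exact composant_eq_of_mem hX hbca
      exact hab (hCa ▸ hC'b ▸ congrArg pt (Subtype.ext this).symm)
    rw [hcl]
    exact fun _ _ => mem_univ _


end Main
end

section
/- Let X be an indecomposable continuum with more than one point, let 𝒞(X) be the set of composants of X, and let 𝒮(X) = {S ⊆ X : S is closed and X \ S is not connected}. Then |𝒮(X)| ≥ |𝒞(X)|; consequently, |𝒮(X)| ≤ |𝒞(X)| holds if and only if |𝒮(X)| = |𝒞(X)|. -/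
universe u

open Set

section Aux

variable {α : Type u} [TopologicalSpace α]

/-- In a compact Hausdorff space, if the connected component of a point is contained in an
open set, there is a clopen set between them. -/
lemma exists_isClopen_between [T2Space α] [CompactSpace α]
    {a : α} {U : Set α} (hU : IsOpen U) (h : connectedComponent a ⊆ U) :
    ∃ E : Set α, IsClopen E ∧ a ∈ E ∧ E ⊆ U := by
  have key := connectedComponent_eq_iInter_isClopen a
  have hcpt : IsCompact Uᶜ := hU.isClosed_compl.isCompact
  have hcover : Uᶜ ⊆ ⋃ Z : {Z : Set α // IsClopen Z ∧ a ∈ Z}, (Z : Set α)ᶜ := by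
    intro x hx
    by_contra hc
    simp only [mem_iUnion, mem_compl_iff, not_exists, not_not] at hc
    have hxc : x ∈ connectedComponent a := by
      rw [key]; exact mem_iInter.2 fun Z => hc Z
    exact hx (h hxc)
  obtain ⟨t, ht⟩ := hcpt.elim_finite_subcover _
    (fun Z : {Z : Set α // IsClopen Z ∧ a ∈ Z} => Z.2.1.isClosed.isOpen_compl) hcover
  refine ⟨⋂ Z ∈ t, (Z : Set α), isClopen_biInter_finset fun Z _ => Z.2.1, ?_, ?_⟩
  · exact mem_iInter₂.2 fun Z _ => Z.2.2
  · intro x hx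
    by_contra hxU
    obtain ⟨Z, hZt, hZx⟩ := mem_iUnion₂.1 (ht hxU)
    exact hZx (mem_iInter₂.1 hx Z hZt)

/-- Boundary bumping: the connected component of `x` in a proper closed subset `A` of a
continuum reaches the closure of the complement of `A`. -/
lemma exists_subcontinuum_reaching [T2Space α] [CompactSpace α] [PreconnectedSpace α]
    {A : Set α} (hA : IsClosed A) (hAne : A ≠ univ) {x : α} (hx : x ∈ A) :
    ∃ K : Set α, IsCompact K ∧ IsConnected K ∧ K ≠ univ ∧ x ∈ K ∧
      (K ∩ closure Aᶜ).Nonempty := by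
  haveI : CompactSpace A := isCompact_iff_compactSpace.mp hA.isCompact
  set a : A := ⟨x, hx⟩
  set K : Set α := Subtype.val '' connectedComponent a with hK
  obtain ⟨y, hy⟩ := (ne_univ_iff_exists_notMem A).mp hAne
  have hKsubA : K ⊆ A := by rintro z ⟨w, _, rfl⟩; exact w.2
  have hKcpt : IsCompact K :=
    (isClosed_connectedComponent.isCompact).image continuous_subtype_val
  have hKconn : IsConnected K :=
    isConnected_connectedComponent.image _ continuous_subtype_val.continuousOn
  have hKne : K ≠ univ := fun h => hy (hKsubA (h ▸ mem_univ y))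
  have hxK : x ∈ K := ⟨a, mem_connectedComponent, rfl⟩
  refine ⟨K, hKcpt, hKconn, hKne, hxK, ?_⟩
  by_contra hempty
  rw [not_nonempty_iff_eq_empty] at hempty
  -- K lies in the open set G := (closure Aᶜ)ᶜ, which is contained in A
  set G : Set α := (closure Aᶜ)ᶜ with hG
  have hGopen : IsOpen G := isClosed_closure.isOpen_compl
  have hGsubA : G ⊆ A := fun z hz => by
    by_contra hzA
    exact hz (subset_closure hzA)
  have hKsubG : K ⊆ G := by
    intro z hz
    intro hzc
    exact (eq_empty_iff_forall_notMem.mp hempty z) ⟨hz, hzc⟩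
  have hsub : connectedComponent a ⊆ Subtype.val ⁻¹' G := by
    intro w hw
    exact hKsubG ⟨w, hw, rfl⟩
  obtain ⟨E, hEclopen, haE, hEsub⟩ :=
    exists_isClopen_between (hGopen.preimage continuous_subtype_val) hsub
  obtain ⟨O, hOopen, hOE⟩ := isOpen_induced_iff.mp hEclopen.isOpen
  set E' : Set α := Subtype.val '' E with hE'
  have hE'subG : E' ⊆ G := by rintro z ⟨w, hw, rfl⟩; exact hEsub hw
  have hE'eq : E' = O ∩ G := by
    apply Subset.antisymm
    · rintro z ⟨w, hw, rfl⟩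
      refine ⟨?_, hEsub hw⟩
      rw [← hOE] at hw; exact hw
    · rintro z ⟨hzO, hzG⟩
      refine ⟨⟨z, hGsubA hzG⟩, ?_, rfl⟩
      rw [← hOE]; exact hzO
  have hE'open : IsOpen E' := hE'eq ▸ hOopen.inter hGopen
  have hE'closed : IsClosed E' :=
    ((hEclopen.isClosed.isCompact).image continuous_subtype_val).isClosed
  have hE'ne : E'.Nonempty := ⟨x, a, haE, rfl⟩
  have hclopen : IsClopen E' := ⟨hE'closed, hE'open⟩
  have huniv := hclopen.eq_univ hE'ne
  exact hy (hGsubA (hE'subG (huniv ▸ mem_univ y)))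

variable {X : Type u} [TopologicalSpace X]

lemma mem_composant_self_s2 [Nontrivial X] [T1Space X] (x : X) : x ∈ composant x := by
  obtain ⟨y, hy⟩ := exists_ne x
  refine ⟨{x}, ⟨rfl, isCompact_singleton, isConnected_singleton, ?_⟩, rfl⟩
  intro h
  exact hy (by simpa using (h.symm ▸ mem_univ y : y ∈ ({x} : Set X)))

/-- Composants of a continuum are dense. -/
lemma composant_dense_s2 [CompactSpace X] [T2Space X] [ConnectedSpace X] [Nontrivial X]
    (x : X) {U : Set X} (hU : IsOpen U) (hUne : U.Nonempty) :
    (composant x ∩ U).Nonempty := by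
  by_cases hxU : x ∈ U
  · exact ⟨x, mem_composant_self_s2 x, hxU⟩
  obtain ⟨q, hq⟩ := hUne
  obtain ⟨s, hs, hsclosed, hsU⟩ := exists_mem_nhds_isClosed_subset (hU.mem_nhds hq)
  set W : Set X := interior s with hW
  have hqW : q ∈ W := mem_interior_iff_mem_nhds.mpr hs
  have hclW : closure W ⊆ U := by
    calc closure W ⊆ closure s := closure_mono interior_subset
    _ = s := hsclosed.closure_eq
    _ ⊆ U := hsU
  have hxA : x ∈ Wᶜ := fun hxW => hxU (hclW (subset_closure hxW))
  have hAne : Wᶜ ≠ univ := fun h => (h ▸ mem_univ q : q ∈ Wᶜ) hqW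
  obtain ⟨K, hKcpt, hKconn, hKne, hxK, z, hzK, hzcl⟩ :=
    exists_subcontinuum_reaching (isOpen_interior.isClosed_compl) hAne hxA
  rw [compl_compl] at hzcl
  exact ⟨z, ⟨K, ⟨hxK, hKcpt, hKconn, hKne⟩, hzK⟩, hclW hzcl⟩

/-- In an indecomposable continuum, composants meeting each other coincide. -/
lemma composant_subset_of_mem (hX : Indecomposable X) {x y z : X}
    (hzx : z ∈ composant x) (hzy : z ∈ composant y) :
    composant x ⊆ composant y := by
  rintro w ⟨M, ⟨hxM, hMc, hMconn, hMne⟩, hwM⟩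
  obtain ⟨K, ⟨hxK, hKc, hKconn, hKne⟩, hzK⟩ := hzx
  obtain ⟨L, ⟨hyL, hLc, hLconn, hLne⟩, hzL⟩ := hzy
  have h1conn : IsConnected (M ∪ K) := IsConnected.union ⟨x, hxM, hxK⟩ hMconn hKconn
  have h1c : IsCompact (M ∪ K) := hMc.union hKc
  have h1ne : M ∪ K ≠ univ := fun h =>
    hX ⟨M, K, hMc, hMconn, hMne, hKc, hKconn, hKne, h⟩
  have h2conn : IsConnected ((M ∪ K) ∪ L) :=
    IsConnected.union ⟨z, Or.inr hzK, hzL⟩ h1conn hLconn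
  have h2c : IsCompact ((M ∪ K) ∪ L) := h1c.union hLc
  have h2ne : (M ∪ K) ∪ L ≠ univ := fun h =>
    hX ⟨M ∪ K, L, h1c, h1conn, h1ne, hLc, hLconn, hLne, h⟩
  exact ⟨(M ∪ K) ∪ L, ⟨Or.inr hyL, h2c, h2conn, h2ne⟩, Or.inl (Or.inl hwM)⟩

/-- A nonempty open set in a nondegenerate connected T1 space is not a single point. -/
lemma open_diff_singleton_nonempty [T1Space X] [PreconnectedSpace X] [Nontrivial X]
    {U : Set X} (hU : IsOpen U) (hUne : U.Nonempty) (p : X) :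
    (U \ {p}).Nonempty := by
  by_contra h
  rw [not_nonempty_iff_eq_empty, diff_eq_empty] at h
  have hUp : U = {p} := Subset.antisymm h (by
    obtain ⟨q, hq⟩ := hUne
    have : q = p := h hq
    subst this
    exact singleton_subset_iff.mpr hq)
  have hclopen : IsClopen U := ⟨hUp ▸ isClosed_singleton, hU⟩
  have huniv := hclopen.eq_univ hUne
  obtain ⟨r, hr⟩ := exists_ne p
  exact hr (by simpa [hUp] using (huniv ▸ mem_univ r : r ∈ U) : r = p)

end Aux

/-- For a nondegenerate indecomposable continuum, `|𝒮(X)| ≥ |𝒞(X)|`; consequently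
`|𝒮(X)| ≤ |𝒞(X)|` holds iff `|𝒮(X)| = |𝒞(X)|`. -/
theorem separators_card_ge_composants_card {X : Type u} [TopologicalSpace X]
    [CompactSpace X] [T2Space X] [ConnectedSpace X] [Nontrivial X]
    (hX : Indecomposable X) :
    Cardinal.mk (composants X) ≤ Cardinal.mk (separators X) ∧
      (Cardinal.mk (separators X) ≤ Cardinal.mk (composants X) ↔
        Cardinal.mk (separators X) = Cardinal.mk (composants X)) := by
  have main : Cardinal.mk (composants X) ≤ Cardinal.mk (separators X) := by
    obtain ⟨a, b, hab⟩ := exists_pair_ne X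
    obtain ⟨U, V, hUo, hVo, haU, hbV, hUV⟩ := t2_separation hab
    -- choose a point of each composant inside U, using density of composants
    have hpt : ∀ C : composants X, ∃ q : X, q ∈ (C : Set X) ∩ U := by
      rintro ⟨C, x, rfl⟩
      exact composant_dense_s2 x hUo ⟨a, haU⟩
    choose p hp using hpt
    have hpC : ∀ C : composants X, p C ∈ (C : Set X) := fun C => (hp C).1
    have hpU : ∀ C : composants X, p C ∈ U := fun C => (hp C).2
    -- the associated separators
    have hmem : ∀ C : composants X, ((U ∪ V) \ {p C})ᶜ ∈ separators X := by
      intro C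
      have hWo : IsOpen ((U ∪ V) \ {p C}) := (hUo.union hVo).sdiff isClosed_singleton
      refine ⟨isClosed_compl_iff.mpr hWo, ?_⟩
      rw [compl_compl]
      intro hpre
      obtain ⟨q, hqU, hqp⟩ := open_diff_singleton_nonempty hUo ⟨a, haU⟩ (p C)
      have hbp : b ≠ p C := (hUV.ne_of_mem (hpU C) hbV).symm
      have h1 : (((U ∪ V) \ {p C}) ∩ U).Nonempty := ⟨q, ⟨Or.inl hqU, hqp⟩, hqU⟩
      have h2 : (((U ∪ V) \ {p C}) ∩ V).Nonempty :=
        ⟨b, ⟨Or.inr hbV, fun h => hbp h⟩, hbV⟩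
      obtain ⟨r, -, hrU, hrV⟩ := hpre U V hUo hVo diff_subset h1 h2
      exact hUV.ne_of_mem hrU hrV rfl
    set f : composants X → separators X := fun C => ⟨_, hmem C⟩ with hf
    have hinj : Function.Injective f := by
      intro C D h
      have hval : ((U ∪ V) \ {p C})ᶜ = ((U ∪ V) \ {p D})ᶜ := congrArg Subtype.val h
      have hW : (U ∪ V) \ {p C} = (U ∪ V) \ {p D} := by
        rw [← compl_compl ((U ∪ V) \ {p C}), hval, compl_compl]
      have hpeq : p C = p D := by
        by_contra hne
        have hmemC : p C ∈ (U ∪ V) \ {p D} := ⟨Or.inl (hpU C), hne⟩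
        rw [← hW] at hmemC
        exact hmemC.2 rfl
      obtain ⟨x, hx⟩ := C.2
      obtain ⟨y, hy⟩ := D.2
      have hzx : p C ∈ composant x := hx ▸ hpC C
      have hzy : p C ∈ composant y := by rw [hpeq]; exact hy ▸ hpC D
      have : composant x = composant y :=
        Subset.antisymm (composant_subset_of_mem hX hzx hzy)
          (composant_subset_of_mem hX hzy hzx)
      exact Subtype.ext (by rw [hx, hy, this])
    exact Cardinal.mk_le_of_injective hinj
  exact ⟨main, ⟨fun h => le_antisymm h main, fun h => le_of_eq h⟩⟩
end
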